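/- arXiv:1901.00318 — 7 statements merged into one kernel-verified Lean document; each statement's English description precedes it below -/
import Mathlib

section
/- Suppose functions $A_n, B_n$ (of a complex variable $z$) and constants $\alpha_n, \beta_n$ satisfy for all $n\ge 0$ the compatibility conditions $(S_1)$: $B_{n+1}(z)+B_n(z)=(z-\alpha_n)A_n(z)-\mathrm{v}_0'(z)$ and $(S_2)$: $1+(z-\alpha_n)(B_{n+1}(z)-B_n(z))=\beta_{n+1}A_{n+1}(z)-\beta_n A_{n-1}(z)$, with $B_0(z)=0$ and $\beta_0 A_{-1}(z)=0$. Then for all $n\ge 0$: $B_n(z)^2+\mathrm{v}_0'(z)B_n(z)+\sum_{j=0}^{n-1}A_j(z)=\beta_n A_n(z)A_{n-1}(z)$ (condition $(S_2')$). -/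
/-! Multiplying `(S₂)` at `n` by `A n` and rewriting `(z - α n) * A n` with `(S₁)` shows that both
sides of `(S₂')` change by the same amount from `n` to `n + 1`, so the identity telescopes from
`B 0 = 0`, `β 0 = 0`. -/

open Finset

section SumRule

variable {R : Type*} [CommRing R] (a b c β : ℕ → R) (v : R)

theorem sumRule_increment (n : ℕ)
    (hS1 : b (n + 1) + b n = c n * a n - v)
    (hS2 : 1 + c n * (b (n + 1) - b n) = β (n + 1) * a (n + 1) - β n * a (n - 1)) :
    (b (n + 1) ^ 2 + v * b (n + 1)) - (b n ^ 2 + v * b n) + a n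
      = β (n + 1) * a (n + 1) * a n - β n * a n * a (n - 1) := by
  linear_combination a n * hS2 + (b (n + 1) - b n) * hS1

theorem sumRule_of_compatibility (hb0 : b 0 = 0) (hβ0 : β 0 = 0)
    (hS1 : ∀ n, b (n + 1) + b n = c n * a n - v)
    (hS2 : ∀ n, 1 + c n * (b (n + 1) - b n) = β (n + 1) * a (n + 1) - β n * a (n - 1))
    (n : ℕ) :
    b n ^ 2 + v * b n + ∑ j ∈ range n, a j = β n * a n * a (n - 1) := by
  induction n with
  | zero => simp [hb0, hβ0]
  | succ n ih =>
    rw [sum_range_succ, Nat.add_sub_cancel]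
    linear_combination ih + sumRule_increment a b c β v n (hS1 n) (hS2 n)

end SumRule

/-- The sum rule `(S₂')` follows from the compatibility conditions `(S₁)` and `(S₂)`. -/
theorem stmt_2 (A B : ℕ → ℂ → ℂ) (α β : ℕ → ℂ) (v0' : ℂ → ℂ)
    (hB0 : ∀ z, B 0 z = 0) (hβ0 : β 0 = 0)
    (hS1 : ∀ n : ℕ, ∀ z : ℂ,
      B (n + 1) z + B n z = (z - α n) * A n z - v0' z)
    (hS2 : ∀ n : ℕ, ∀ z : ℂ,
      1 + (z - α n) * (B (n + 1) z - B n z)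
        = β (n + 1) * A (n + 1) z - β n * A (n - 1) z) :
    ∀ n : ℕ, ∀ z : ℂ,
      (B n z) ^ 2 + v0' z * B n z + ∑ j ∈ Finset.range n, A j z
        = β n * A n z * A (n - 1) z := fun n z =>
  sumRule_of_compatibility (A · z) (B · z) (z - α ·) β (v0' z) (hB0 z) hβ0 (hS1 · z) (hS2 · z) n
end

section
/- Suppose $P_n$ satisfies the lowering relation $(\frac{d}{dz}+B_n(z))P_n(z)=\beta_n A_n(z)P_{n-1}(z)$, the raising relation $(\frac{d}{dz}-B_n(z)-\mathrm{v}_0'(z))P_{n-1}(z)=-A_{n-1}(z)P_n(z)$, and the sum rule $(S_2')$: $B_n^2+\mathrm{v}_0'B_n+\sum_{j=0}^{n-1}A_j=\beta_n A_n A_{n-1}$. Then on the set where $A_n(z)\neq 0$, $P_n$ satisfies the second-order ODE $P_n''(z)-\big(\mathrm{v}_0'(z)+\frac{A_n'(z)}{A_n(z)}\big)P_n'(z)+\big(B_n'(z)-B_n(z)\frac{A_n'(z)}{A_n(z)}+\sum_{j=0}^{n-1}A_j(z)\big)P_n(z)=0$. -/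
/-!
Differentiating the lowering relation and substituting the raising relation for `P_{n-1}'`
gives an identity in `P_n'', P_n', P_n, P_{n-1}`. The lowering relation expresses
`β_n A_n P_{n-1}` through `P_n` and `P_n'`, and `(S₂')` turns the remaining
`β_n A_n A_{n-1} P_n` into `(B_n² + v₀' B_n + Σ A_j) P_n`; after multiplying by `A_n`,
`P_{n-1}` disappears and the ODE is left.
-/

section LadderODE

variable {𝕜 : Type*} [NontriviallyNormedField 𝕜]
  {Pn Pn' Pn'' Pnm1 An An' Anm1 Bn Bn' v0' : 𝕜 → 𝕜} {βn : 𝕜}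

theorem deriv_lowering_eq
    (hPn : ∀ z, HasDerivAt Pn (Pn' z) z)
    (hPn' : ∀ z, HasDerivAt Pn' (Pn'' z) z)
    (hAn : ∀ z, HasDerivAt An (An' z) z)
    (hBn : ∀ z, HasDerivAt Bn (Bn' z) z)
    (hlow : ∀ z, Pn' z + Bn z * Pn z = βn * An z * Pnm1 z)
    (hraise : ∀ z, HasDerivAt Pnm1 ((Bn z + v0' z) * Pnm1 z - Anm1 z * Pn z) z) (z : 𝕜) :
    Pn'' z + (Bn' z * Pn z + Bn z * Pn' z) =
      βn * An' z * Pnm1 z + βn * An z * ((Bn z + v0' z) * Pnm1 z - Anm1 z * Pn z) := by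
  have hlhs : HasDerivAt (fun z => Pn' z + Bn z * Pn z) _ z :=
    (hPn' z).add ((hBn z).mul (hPn z))
  rw [funext hlow] at hlhs
  exact hlhs.unique (((hAn z).const_mul βn).mul (hraise z))

theorem ladder_ode_mul_An {sumA : 𝕜 → 𝕜}
    (hPn : ∀ z, HasDerivAt Pn (Pn' z) z)
    (hPn' : ∀ z, HasDerivAt Pn' (Pn'' z) z)
    (hAn : ∀ z, HasDerivAt An (An' z) z)
    (hBn : ∀ z, HasDerivAt Bn (Bn' z) z)
    (hlow : ∀ z, Pn' z + Bn z * Pn z = βn * An z * Pnm1 z)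
    (hraise : ∀ z, HasDerivAt Pnm1 ((Bn z + v0' z) * Pnm1 z - Anm1 z * Pn z) z)
    (hS2' : ∀ z, Bn z ^ 2 + v0' z * Bn z + sumA z = βn * An z * Anm1 z) (z : 𝕜) :
    An z * (Pn'' z - v0' z * Pn' z + (Bn' z + sumA z) * Pn z)
      - An' z * (Pn' z + Bn z * Pn z) = 0 := by
  linear_combination An z * deriv_lowering_eq hPn hPn' hAn hBn hlow hraise z
    - (An' z + An z * (Bn z + v0' z)) * hlow z + An z * Pn z * hS2' z

end LadderODE

/-- Second-order ODE for the orthogonal polynomials, from the ladder relations and `(S₂')`. -/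
theorem stmt_4 (Pn Pn' Pn'' Pnm1 An An' Anm1 Bn Bn' v0' sumA : ℝ → ℝ) (βn : ℝ)
    (hPn : ∀ z, HasDerivAt Pn (Pn' z) z)
    (hPn' : ∀ z, HasDerivAt Pn' (Pn'' z) z)
    (hAn : ∀ z, HasDerivAt An (An' z) z)
    (hBn : ∀ z, HasDerivAt Bn (Bn' z) z)
    (hlow : ∀ z, Pn' z + Bn z * Pn z = βn * An z * Pnm1 z)
    (hraise : ∀ z, HasDerivAt Pnm1 ((Bn z + v0' z) * Pnm1 z - Anm1 z * Pn z) z)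
    (hS2' : ∀ z, (Bn z) ^ 2 + v0' z * Bn z + sumA z = βn * An z * Anm1 z) :
    ∀ z, An z ≠ 0 →
      Pn'' z - (v0' z + An' z / An z) * Pn' z
        + (Bn' z - Bn z * (An' z / An z) + sumA z) * Pn z = 0 := by
  intro z hAnz
  have h := ladder_ode_mul_An hPn hPn' hAn hBn hlow hraise hS2' z
  field_simp
  linear_combination h
end

section
/- Let sequences of differentiable functions $r_n(t)$, $R_n(t)$ and scalars $\beta_n$ satisfy, for all $n\ge 0$: $r_{n+1}+r_n=\gamma+(t-\alpha_n)R_n$ and $(t-\alpha_n)(r_{n+1}-r_n)=\beta_{n+1}R_{n+1}-\beta_n R_{n-1}$, with initial data $r_0=0$ and $\beta_0 R_{-1}=0$. Then for all $n\ge 1$: $r_n^2-\gamma r_n=\beta_n R_n R_{n-1}$. -/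
/-!
Multiplying the second string equation by `R_n` and substituting `(t - α_n) R_n = r_{n+1} + r_n - γ`
from the first turns it into the exact difference
`(r_{n+1}² - γ r_{n+1}) - (r_n² - γ r_n) = β_{n+1} R_{n+1} R_n - β_n R_n R_{n-1}`,
so `r_n² - γ r_n - β_n R_n R_{n-1}` is conserved, and it vanishes at `n = 0`.
-/

section StringEquations

variable {K : Type*} [CommRing K] (r R α β : ℕ → K) (γ t : K)

theorem string_invariant_succ (n : ℕ)
    (h1 : r (n + 1) + r n = γ + (t - α n) * R n)
    (h2 : (t - α n) * (r (n + 1) - r n) = β (n + 1) * R (n + 1) - β n * R (n - 1)) :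
    r (n + 1) ^ 2 - γ * r (n + 1) - β (n + 1) * R (n + 1) * R n
      = r n ^ 2 - γ * r n - β n * R n * R (n - 1) := by
  linear_combination (r (n + 1) - r n) * h1 + R n * h2

theorem sq_sub_mul_eq_of_string_equations
    (hr0 : r 0 = 0) (hβ0 : β 0 = 0)
    (h1 : ∀ n : ℕ, r (n + 1) + r n = γ + (t - α n) * R n)
    (h2 : ∀ n : ℕ, (t - α n) * (r (n + 1) - r n)
        = β (n + 1) * R (n + 1) - β n * R (n - 1)) (n : ℕ) :
    r n ^ 2 - γ * r n = β n * R n * R (n - 1) := by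
  rw [← sub_eq_zero]
  induction n with
  | zero => simp [hr0, hβ0]
  | succ n ih => rwa [Nat.add_sub_cancel, string_invariant_succ r R α β γ t n (h1 n) (h2 n)]

end StringEquations

/-- Telescoping identity `r_n² - γ r_n = β_n R_n R_{n-1}` from the string equations. -/
theorem stmt_5 (r R α β : ℕ → ℝ) (γ t : ℝ)
    (hr0 : r 0 = 0) (hβ0 : β 0 = 0)
    (h1 : ∀ n : ℕ, r (n + 1) + r n = γ + (t - α n) * R n)
    (h2 : ∀ n : ℕ, (t - α n) * (r (n + 1) - r n)
        = β (n + 1) * R (n + 1) - β n * R (n - 1)) :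
    ∀ n : ℕ, 1 ≤ n → (r n) ^ 2 - γ * r n = β n * R n * R (n - 1) :=
  fun n _ => sq_sub_mul_eq_of_string_equations r R α β γ t hr0 hβ0 h1 h2 n
end

section
/- Let $R(t)$ and $r(t)$ be differentiable on an interval with $t>0$, $R(t)\notin\{0,1\}$, satisfying the coupled Riccati equations $tR'=tR^2+(2n+\alpha+\gamma-t)R+2r-\gamma$ and $tr'=\frac{r^2-\gamma r}{R}-\frac{r^2-\gamma r+[(2n+\alpha+\gamma)r+n(n+\alpha)]R}{1-R}$. Then $R$ satisfies the second-order equation $2t^2R(1-R)R''-t^2(1-2R)(R')^2+2tR(1-R)R'+2t^2R^5+t(4n+2+2\alpha+2\gamma-5t)R^4-4t(2n+1+\alpha+\gamma-t)R^3-[t^2-2(2n+1+\alpha+\gamma)t+\alpha^2-\gamma^2]R^2-2\gamma^2 R+\gamma^2=0$. -/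
/-- From the coupled Riccati equations, `R_n` satisfies a nonlinear second-order ODE. -/
theorem stmt_10 (n : ℕ) (α γ : ℝ) (hα : 0 < α) (hγ : 0 < γ)
    (R R1 R2 r r1 : ℝ → ℝ)
    (hR : ∀ t : ℝ, 0 < t → HasDerivAt R (R1 t) t)
    (hR1 : ∀ t : ℝ, 0 < t → HasDerivAt R1 (R2 t) t)
    (hr : ∀ t : ℝ, 0 < t → HasDerivAt r (r1 t) t)
    (hR0 : ∀ t : ℝ, 0 < t → R t ≠ 0)
    (hRone : ∀ t : ℝ, 0 < t → R t ≠ 1)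
    (hric1 : ∀ t : ℝ, 0 < t →
      t * R1 t = t * (R t) ^ 2 + (2 * n + α + γ - t) * R t + 2 * r t - γ)
    (hric2 : ∀ t : ℝ, 0 < t →
      t * r1 t = ((r t) ^ 2 - γ * r t) / R t
        - ((r t) ^ 2 - γ * r t + ((2 * n + α + γ) * r t + n * (n + α)) * R t) / (1 - R t)) :
    ∀ t : ℝ, 0 < t →
      2 * t ^ 2 * R t * (1 - R t) * R2 t - t ^ 2 * (1 - 2 * R t) * (R1 t) ^ 2
        + 2 * t * R t * (1 - R t) * R1 t + 2 * t ^ 2 * (R t) ^ 5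
        + t * (4 * n + 2 + 2 * α + 2 * γ - 5 * t) * (R t) ^ 4
        - 4 * t * (2 * n + 1 + α + γ - t) * (R t) ^ 3
        - (t ^ 2 - 2 * (2 * n + 1 + α + γ) * t + α ^ 2 - γ ^ 2) * (R t) ^ 2
        - 2 * γ ^ 2 * R t + γ ^ 2 = 0 := by
  intro t ht
  have hR0t := hR0 t ht
  have h1R : 1 - R t ≠ 0 := sub_ne_zero.mpr (Ne.symm (hRone t ht))
  -- r expressed via R, R1
  have hrval : 2 * r t = t * R1 t - t * (R t) ^ 2 - (2 * n + α + γ - t) * R t + γ := by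
    have := hric1 t ht; linarith
  -- derivative of that expression
  have he : HasDerivAt
      (fun s => s * R1 s - s * (R s) ^ 2 - (2 * n + α + γ - s) * R s + γ)
      (R1 t + t * R2 t - ((R t) ^ 2 + t * (2 * R t * R1 t))
        - ((-1) * R t + (2 * n + α + γ - t) * R1 t) + 0) t := by
    have hRt := hR t ht
    have hR1t := hR1 t ht
    have h1 : HasDerivAt (fun s : ℝ => s * R1 s) (1 * R1 t + t * R2 t) t :=
      (hasDerivAt_id t).mul hR1t
    have h2 : HasDerivAt (fun s : ℝ => s * (R s) ^ 2)
        (1 * (R t) ^ 2 + t * (2 * R t ^ 1 * R1 t)) t :=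
      (hasDerivAt_id t).mul (hRt.pow 2)
    have h3 : HasDerivAt (fun s : ℝ => (2 * n + α + γ - s) * R s)
        ((0 - 1) * R t + (2 * n + α + γ - t) * R1 t) t :=
      ((hasDerivAt_const t (2 * (n : ℝ) + α + γ)).sub (hasDerivAt_id t)).mul hRt
    have : HasDerivAt (fun s => s * R1 s - s * (R s) ^ 2 - (2 * n + α + γ - s) * R s + γ) _ t :=
      ((h1.sub h2).sub h3).add_const γ
    convert this using 1
    ring
  -- 2 r' equals that derivative
  have hr1val : 2 * r1 t = R1 t + t * R2 t - ((R t) ^ 2 + t * (2 * R t * R1 t))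
      - ((-1) * R t + (2 * n + α + γ - t) * R1 t) + 0 := by
    have h2r : HasDerivAt (fun s => 2 * r s) (2 * r1 t) t := (hr t ht).const_mul 2
    have heq : (fun s => 2 * r s) =ᶠ[nhds t]
        (fun s => s * R1 s - s * (R s) ^ 2 - (2 * n + α + γ - s) * R s + γ) := by
      filter_upwards [Ioi_mem_nhds ht] with s hs
      have := hric1 s hs
      linarith
    exact h2r.unique (he.congr_of_eventuallyEq heq)
  -- cleared second Riccati equation
  have h2' : t * r1 t * (R t * (1 - R t)) =
      ((r t) ^ 2 - γ * r t) * (1 - R t)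
        - ((r t) ^ 2 - γ * r t + ((2 * n + α + γ) * r t + n * (n + α)) * R t) * R t := by
    have h := hric2 t ht
    field_simp at h
    linarith
  linear_combination (4 : ℝ) * h2'
    + (2 * r t - γ - 4 * R t * r t - 2 * R t * n + R t * γ - R t * α + t * R1 t + t * R t
        - 2 * t * R t * R1 t - 3 * t * (R t) ^ 2 + 2 * t * (R t) ^ 3) * hrval
    + (-2 * t * R t + 2 * t * (R t) ^ 2) * hr1val
end

section
/- Let $R(t)$ be twice differentiable with $R(t)\ne 1$, satisfying $2t^2R(1-R)R''-t^2(1-2R)(R')^2+2tR(1-R)R'+2t^2R^5+t(4n+2+2\alpha+2\gamma-5t)R^4-4t(2n+1+\alpha+\gamma-t)R^3-[t^2-2(2n+1+\alpha+\gamma)t+\alpha^2-\gamma^2]R^2-2\gamma^2R+\gamma^2=0$ on an interval with $t>0$. Then $S(t):=\frac{R(t)}{R(t)-1}$ (which satisfies $S\notin\{0,1\}$ where $R\notin\{0,1\}$) solves the Painlevé V equation $S''=\frac{(3S-1)(S')^2}{2S(S-1)}-\frac{S'}{t}+\frac{(S-1)^2}{t^2}\Big(\frac{\alpha^2 S}{2}-\frac{\gamma^2}{2S}\Big)-\frac{(2n+1+\alpha+\gamma)S}{t}-\frac{S(S+1)}{2(S-1)}$.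 -/
/-! With `S = R/(R-1)` one has `S' = -R'/(R-1)²` and `S'' = (2R'² - R''(R-1))/(R-1)³`.
Substituting these into the Painlevé V equation and clearing denominators (nonzero since
`t > 0` and `R ∉ {0, 1}`) leaves exactly the given second-order equation for `R`. -/

open Filter Topology

section DivSubOne

variable {𝕜 : Type*} [NontriviallyNormedField 𝕜] {f f₁ : 𝕜 → 𝕜} {f' f₂ x : 𝕜}

theorem HasDerivAt.div_sub_one (hf : HasDerivAt f f' x) (hx : f x ≠ 1) :
    HasDerivAt (fun s => f s / (f s - 1)) (-f' / (f x - 1) ^ 2) x := by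
  have hx' : f x - 1 ≠ 0 := sub_ne_zero.mpr hx
  refine (hf.fun_div (hf.sub_const 1) hx').congr_deriv ?_
  field_simp
  ring

theorem deriv_deriv_div_sub_one (hf : ∀ᶠ s in 𝓝 x, HasDerivAt f (f₁ s) s ∧ f s ≠ 1)
    (hf₁ : HasDerivAt f₁ f₂ x) :
    deriv (deriv fun s => f s / (f s - 1)) x
      = (2 * f₁ x ^ 2 - f₂ * (f x - 1)) / (f x - 1) ^ 3 := by
  have hderiv : deriv (fun s => f s / (f s - 1)) =ᶠ[𝓝 x] fun s => -f₁ s / (f s - 1) ^ 2 :=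
    hf.mono fun s hs => (hs.1.div_sub_one hs.2).deriv
  obtain ⟨hfx, hx⟩ := hf.self_of_nhds
  have hx' : f x - 1 ≠ 0 := sub_ne_zero.mpr hx
  rw [hderiv.deriv_eq]
  refine ((hf₁.fun_neg.fun_div ((hfx.sub_const 1).fun_pow 2) (pow_ne_zero 2 hx')).deriv).trans ?_
  field_simp
  ring

end DivSubOne

theorem div_sub_one_ne_one {K : Type*} [DivisionRing K] (r : K) : r / (r - 1) ≠ 1 := by
  intro h
  have hr : r - 1 ≠ 0 := by
    rintro h0
    simp [h0] at h
  rw [div_eq_one_iff_eq hr] at h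
  exact one_ne_zero (sub_eq_self.mp h.symm)

theorem painleveV_of_ode {n : ℕ} {α γ t r r₁ r₂ S' S'' : ℝ} (ht : t ≠ 0) (hr0 : r ≠ 0)
    (hr1 : r ≠ 1) (hS' : S' = -r₁ / (r - 1) ^ 2)
    (hS'' : S'' = (2 * r₁ ^ 2 - r₂ * (r - 1)) / (r - 1) ^ 3)
    (hode : 2 * t ^ 2 * r * (1 - r) * r₂ - t ^ 2 * (1 - 2 * r) * r₁ ^ 2
        + 2 * t * r * (1 - r) * r₁ + 2 * t ^ 2 * r ^ 5
        + t * (4 * n + 2 + 2 * α + 2 * γ - 5 * t) * r ^ 4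
        - 4 * t * (2 * n + 1 + α + γ - t) * r ^ 3
        - (t ^ 2 - 2 * (2 * n + 1 + α + γ) * t + α ^ 2 - γ ^ 2) * r ^ 2
        - 2 * γ ^ 2 * r + γ ^ 2 = 0) :
    S'' = (3 * (r / (r - 1)) - 1) * S' ^ 2 / (2 * (r / (r - 1)) * (r / (r - 1) - 1))
          - S' / t
          + ((r / (r - 1) - 1) ^ 2 / t ^ 2)
              * (α ^ 2 * (r / (r - 1)) / 2 - γ ^ 2 / (2 * (r / (r - 1))))
          - (2 * n + 1 + α + γ) * (r / (r - 1)) / t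
          - (r / (r - 1)) * (r / (r - 1) + 1) / (2 * (r / (r - 1) - 1)) := by
  have hr1' : r - 1 ≠ 0 := sub_ne_zero.mpr hr1
  have hS1 : r / (r - 1) - 1 ≠ 0 := sub_ne_zero.mpr (div_sub_one_ne_one r)
  subst hS' hS''
  field_simp
  linear_combination hode

/-- `S := R/(R-1)` satisfies the Painlevé V equation
`P_V(α²/2, -γ²/2, -(2n+1+α+γ), -1/2)`. -/
theorem stmt_11 (n : ℕ) (α γ : ℝ) (R R1 R2 : ℝ → ℝ)
    (hR0 : ∀ t : ℝ, 0 < t → R t ≠ 0)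
    (hR1ne : ∀ t : ℝ, 0 < t → R t ≠ 1)
    (hR : ∀ t : ℝ, 0 < t → HasDerivAt R (R1 t) t)
    (hR1 : ∀ t : ℝ, 0 < t → HasDerivAt R1 (R2 t) t)
    (hode : ∀ t : ℝ, 0 < t →
      2 * t ^ 2 * R t * (1 - R t) * R2 t - t ^ 2 * (1 - 2 * R t) * (R1 t) ^ 2
        + 2 * t * R t * (1 - R t) * R1 t + 2 * t ^ 2 * (R t) ^ 5
        + t * (4 * n + 2 + 2 * α + 2 * γ - 5 * t) * (R t) ^ 4
        - 4 * t * (2 * n + 1 + α + γ - t) * (R t) ^ 3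
        - (t ^ 2 - 2 * (2 * n + 1 + α + γ) * t + α ^ 2 - γ ^ 2) * (R t) ^ 2
        - 2 * γ ^ 2 * R t + γ ^ 2 = 0) :
    ∀ t : ℝ, 0 < t →
      (R t / (R t - 1) ≠ 0 ∧ R t / (R t - 1) ≠ 1) ∧
      deriv (deriv (fun s => R s / (R s - 1))) t
        = (3 * (R t / (R t - 1)) - 1) * (deriv (fun s => R s / (R s - 1)) t) ^ 2
            / (2 * (R t / (R t - 1)) * (R t / (R t - 1) - 1))
          - deriv (fun s => R s / (R s - 1)) t / t
          + ((R t / (R t - 1) - 1) ^ 2 / t ^ 2)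
              * (α ^ 2 * (R t / (R t - 1)) / 2 - γ ^ 2 / (2 * (R t / (R t - 1))))
          - (2 * n + 1 + α + γ) * (R t / (R t - 1)) / t
          - (R t / (R t - 1)) * (R t / (R t - 1) + 1) / (2 * (R t / (R t - 1) - 1)) := by
  intro t ht
  have hnear : ∀ᶠ s in 𝓝 t, HasDerivAt R (R1 s) s ∧ R s ≠ 1 :=
    eventually_of_mem (Ioi_mem_nhds ht) fun s hs => ⟨hR s hs, hR1ne s hs⟩
  refine ⟨⟨div_ne_zero (hR0 t ht) (sub_ne_zero.mpr (hR1ne t ht)), div_sub_one_ne_one _⟩, ?_⟩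
  exact painleveV_of_ode ht.ne' (hR0 t ht) (hR1ne t ht)
    ((hR t ht).div_sub_one (hR1ne t ht)).deriv (deriv_deriv_div_sub_one hnear (hR1 t ht))
    (hode t ht)
end

section
/- For real numbers $a<t<b$, the principal value integral $P\int_a^b \frac{dx}{(x-t)\sqrt{(b-x)(x-a)}}=0$, where the principal value is $\lim_{\epsilon\to 0^+}\Big(\int_a^{t-\epsilon}+\int_{t+\epsilon}^b\Big)\frac{dx}{(x-t)\sqrt{(b-x)(x-a)}}$. -/
open Real Filter Set MeasureTheory intervalIntegral

namespace PV15

noncomputable def G (a b t x : ℝ) : ℝ :=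
  Real.sqrt ((b - t) * (x - a)) + Real.sqrt ((t - a) * (b - x))

/-- Antiderivative of `1/((x-t)√((b-x)(x-a)))` on `(a,b) \ {t}`. -/
noncomputable def F (a b t x : ℝ) : ℝ :=
  -(1 / Real.sqrt ((b - t) * (t - a))) * (2 * Real.log (G a b t x) - Real.log (x - t))

lemma hasDerivAt_F {a b t x : ℝ} (hat : a < t) (htb : t < b) (hax : a < x) (hxb : x < b)
    (hxt : x ≠ t) :
    HasDerivAt (F a b t) (1 / ((x - t) * Real.sqrt ((b - x) * (x - a)))) x := by
  have hbt : (0:ℝ) < b - t := by linarith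
  have hta : (0:ℝ) < t - a := by linarith
  have hxa : (0:ℝ) < x - a := by linarith
  have hbx : (0:ℝ) < b - x := by linarith
  set S := Real.sqrt ((b - t) * (t - a)) with hS
  set p := Real.sqrt ((b - t) * (x - a)) with hp
  set q := Real.sqrt ((t - a) * (b - x)) with hq
  set r := Real.sqrt ((b - x) * (x - a)) with hr
  have hSpos : 0 < S := Real.sqrt_pos.mpr (by positivity)
  have hppos : 0 < p := Real.sqrt_pos.mpr (by positivity)
  have hqpos : 0 < q := Real.sqrt_pos.mpr (by positivity)
  have hrpos : 0 < r := Real.sqrt_pos.mpr (by positivity)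
  have hS2 : S ^ 2 = (b - t) * (t - a) := Real.sq_sqrt (by positivity)
  have hp2 : p ^ 2 = (b - t) * (x - a) := Real.sq_sqrt (by positivity)
  have hq2 : q ^ 2 = (t - a) * (b - x) := Real.sq_sqrt (by positivity)
  have hr2 : r ^ 2 = (b - x) * (x - a) := Real.sq_sqrt (by positivity)
  have hSr : S * r = p * q := by
    rw [hS, hr, hp, hq, ← Real.sqrt_mul (by positivity), ← Real.sqrt_mul (by positivity)]
    ring_nf
  have h1 : HasDerivAt (fun y : ℝ => (b - t) * (y - a)) (b - t) x := by
    simpa using ((hasDerivAt_id x).sub_const a).const_mul (b - t)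
  have h2 : HasDerivAt (fun y : ℝ => (t - a) * (b - y)) ((t - a) * (-1)) x :=
    ((hasDerivAt_id x).const_sub b).const_mul (t - a)
  have hsp : HasDerivAt (fun y : ℝ => Real.sqrt ((b - t) * (y - a)))
      ((b - t) / (2 * p)) x := h1.sqrt (by positivity)
  have hsq : HasDerivAt (fun y : ℝ => Real.sqrt ((t - a) * (b - y)))
      ((t - a) * (-1) / (2 * q)) x := h2.sqrt (by positivity)
  have hg : HasDerivAt (fun y : ℝ => Real.sqrt ((b - t) * (y - a)) + Real.sqrt ((t - a) * (b - y)))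
      ((b - t) / (2 * p) + (t - a) * (-1) / (2 * q)) x := hsp.add hsq
  have hlg : HasDerivAt
      (fun y : ℝ => Real.log (Real.sqrt ((b - t) * (y - a)) + Real.sqrt ((t - a) * (b - y))))
      (((b - t) / (2 * p) + (t - a) * (-1) / (2 * q)) / (p + q)) x :=
    hg.log (by positivity)
  have hl2 : HasDerivAt (fun y : ℝ => Real.log (y - t)) (1 / (x - t)) x := by
    have := ((hasDerivAt_id x).sub_const t).log (sub_ne_zero.mpr hxt)
    simpa using this
  have hF : HasDerivAt (F a b t)
      (-(1 / S) * (2 * (((b - t) / (2 * p) + (t - a) * (-1) / (2 * q)) / (p + q)) - 1 / (x - t)))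
      x := ((hlg.const_mul 2).sub hl2).const_mul (-(1 / S))
  convert hF using 1
  have hxt' : x - t ≠ 0 := sub_ne_zero.mpr hxt
  have hpq : p + q ≠ 0 := by positivity
  field_simp
  apply mul_left_cancel₀ hrpos.ne'
  linear_combination (p*q*(p+q)) * hSr + (-p*q*(p+q) + (x-t)*((b-t)*q-(t-a)*p)) * hr2 +
    (q^2*(p+q) - (b-x)*(x-a)*q) * hp2 + ((b-t)*(x-a)*(p+q) - (b-x)*(x-a)*p) * hq2


lemma integrable_left {a b t c : ℝ} (htb : t < b) (hac : a < c) (hct : c < t) :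
    IntervalIntegrable (fun x => 1 / ((x - t) * Real.sqrt ((b - x) * (x - a)))) volume a c := by
  have hbc : (0:ℝ) < b - c := by linarith
  have htc : (0:ℝ) < t - c := by linarith
  set C : ℝ := 1 / ((t - c) * Real.sqrt (b - c)) with hC
  have hbase : IntervalIntegrable (fun y : ℝ => y ^ (-(1/2) : ℝ)) volume 0 (c - a) :=
    intervalIntegrable_rpow' (by norm_num)
  have hbnd : IntervalIntegrable (fun x : ℝ => C * (x - a) ^ (-(1/2) : ℝ)) volume a c := by
    have := (hbase.comp_sub_right a).const_mul C
    simpa using this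
  refine hbnd.mono_fun' ?_ ?_
  · apply Measurable.aestronglyMeasurable
    fun_prop
  · rw [Filter.EventuallyLE, ae_restrict_iff' measurableSet_uIoc]
    refine Filter.Eventually.of_forall fun x hx => ?_
    rw [Set.uIoc_of_le hac.le] at hx
    obtain ⟨hx1, hx2⟩ := hx
    have hxa : (0:ℝ) < x - a := by linarith
    have hbx : (0:ℝ) < b - x := by linarith
    have htx : (0:ℝ) < t - x := by linarith
    have hrw : (x - a) ^ (-(1/2) : ℝ) = (Real.sqrt (x - a))⁻¹ := by
      rw [Real.rpow_neg hxa.le, Real.sqrt_eq_rpow]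
    have hs : Real.sqrt ((b - x) * (x - a)) = Real.sqrt (b - x) * Real.sqrt (x - a) :=
      Real.sqrt_mul hbx.le _
    have h1 : ‖1 / ((x - t) * Real.sqrt ((b - x) * (x - a)))‖
        = 1 / ((t - x) * (Real.sqrt (b - x) * Real.sqrt (x - a))) := by
      rw [hs, norm_div, norm_one, Real.norm_eq_abs, abs_mul,
        abs_of_neg (by linarith : x - t < 0), abs_of_pos (by positivity)]
      ring_nf
    rw [h1, hC, hrw, one_div]
    have h2 : (t - c) * Real.sqrt (b - c) * Real.sqrt (x - a)
        ≤ (t - x) * (Real.sqrt (b - x) * Real.sqrt (x - a)) := by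
      rw [← mul_assoc]
      exact mul_le_mul_of_nonneg_right
        (mul_le_mul (by linarith) (Real.sqrt_le_sqrt (by linarith)) (Real.sqrt_nonneg _)
          (by linarith)) (Real.sqrt_nonneg _)
    calc ((t - x) * (Real.sqrt (b - x) * Real.sqrt (x - a)))⁻¹
        ≤ ((t - c) * Real.sqrt (b - c) * Real.sqrt (x - a))⁻¹ := by
          apply inv_anti₀ (by positivity) h2
      _ = (Real.sqrt (x - a))⁻¹ * ((t - c) * Real.sqrt (b - c))⁻¹ := by
          rw [mul_inv]; ring
      _ = 1 / ((t - c) * Real.sqrt (b - c)) * (Real.sqrt (x - a))⁻¹ := by ring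

lemma integrable_right {a b t c : ℝ} (hat : a < t) (htc : t < c) (hcb : c < b) :
    IntervalIntegrable (fun x => 1 / ((x - t) * Real.sqrt ((b - x) * (x - a)))) volume c b := by
  have hca : (0:ℝ) < c - a := by linarith
  have hct : (0:ℝ) < c - t := by linarith
  set C : ℝ := 1 / ((c - t) * Real.sqrt (c - a)) with hC
  have hbase : IntervalIntegrable (fun y : ℝ => y ^ (-(1/2) : ℝ)) volume 0 (b - c) :=
    intervalIntegrable_rpow' (by norm_num)
  have hbnd : IntervalIntegrable (fun x : ℝ => C * (b - x) ^ (-(1/2) : ℝ)) volume c b := by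
    have := ((hbase.comp_sub_left b).const_mul C).symm
    simpa using this
  refine hbnd.mono_fun' ?_ ?_
  · apply Measurable.aestronglyMeasurable
    fun_prop
  · rw [Filter.EventuallyLE, ae_restrict_iff' measurableSet_uIoc]
    refine Filter.Eventually.of_forall fun x hx => ?_
    rw [Set.uIoc_of_le hcb.le] at hx
    obtain ⟨hx1, hx2⟩ := hx
    rcases eq_or_lt_of_le hx2 with hxb | hxb
    · subst hxb
      simp [Real.zero_rpow]
    have hxa : (0:ℝ) < x - a := by linarith
    have hbx : (0:ℝ) < b - x := by linarith
    have hxt : (0:ℝ) < x - t := by linarith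
    have hrw : (b - x) ^ (-(1/2) : ℝ) = (Real.sqrt (b - x))⁻¹ := by
      rw [Real.rpow_neg hbx.le, Real.sqrt_eq_rpow]
    have hs : Real.sqrt ((b - x) * (x - a)) = Real.sqrt (b - x) * Real.sqrt (x - a) :=
      Real.sqrt_mul hbx.le _
    have h1 : ‖1 / ((x - t) * Real.sqrt ((b - x) * (x - a)))‖
        = 1 / ((x - t) * (Real.sqrt (b - x) * Real.sqrt (x - a))) := by
      rw [hs, norm_div, norm_one, Real.norm_eq_abs, abs_of_pos (by positivity)]
    rw [h1, hC, hrw, one_div]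
    have h2 : (c - t) * Real.sqrt (c - a) * Real.sqrt (b - x)
        ≤ (x - t) * (Real.sqrt (b - x) * Real.sqrt (x - a)) := by
      calc (c - t) * Real.sqrt (c - a) * Real.sqrt (b - x)
          ≤ (x - t) * Real.sqrt (x - a) * Real.sqrt (b - x) :=
            mul_le_mul_of_nonneg_right
              (mul_le_mul (by linarith) (Real.sqrt_le_sqrt (by linarith)) (Real.sqrt_nonneg _)
                (by linarith)) (Real.sqrt_nonneg _)
        _ = _ := by ring
    calc ((x - t) * (Real.sqrt (b - x) * Real.sqrt (x - a)))⁻¹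
        ≤ ((c - t) * Real.sqrt (c - a) * Real.sqrt (b - x))⁻¹ := by
          apply inv_anti₀ (by positivity) h2
      _ = (Real.sqrt (b - x))⁻¹ * ((c - t) * Real.sqrt (c - a))⁻¹ := by
          rw [mul_inv]; ring
      _ = 1 / ((c - t) * Real.sqrt (c - a)) * (Real.sqrt (b - x))⁻¹ := by ring


lemma continuous_G {a b t : ℝ} : Continuous (G a b t) := by
  unfold G; fun_prop

lemma eval_left {a b t c : ℝ} (hat : a < t) (htb : t < b) (hac : a < c) (hct : c < t) :
    ∫ x in a..c, 1 / ((x - t) * Real.sqrt ((b - x) * (x - a)))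
      = F a b t c - F a b t a := by
  apply intervalIntegral.integral_eq_sub_of_hasDeriv_right_of_le (f := F a b t) hac.le
  · apply ContinuousOn.mul continuousOn_const
    apply ContinuousOn.sub
    · apply ContinuousOn.mul continuousOn_const
      apply ContinuousOn.log continuous_G.continuousOn
      intro x hx
      have h1 : 0 < Real.sqrt ((t - a) * (b - x)) :=
        Real.sqrt_pos.mpr (by nlinarith [hx.2, hx.1])
      have h2 := Real.sqrt_nonneg ((b - t) * (x - a))
      unfold G
      positivity
    · apply ContinuousOn.log (by fun_prop)
      intro x hx
      have := hx.2
      intro h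
      have : x = t := by linarith [sub_eq_zero.mp h]
      linarith [hx.2]
  · intro x hx
    exact (hasDerivAt_F hat htb hx.1 (by linarith [hx.2]) (by linarith [hx.2])).hasDerivWithinAt
  · exact integrable_left htb hac hct

lemma eval_right {a b t c : ℝ} (hat : a < t) (htb : t < b) (htc : t < c) (hcb : c < b) :
    ∫ x in c..b, 1 / ((x - t) * Real.sqrt ((b - x) * (x - a)))
      = F a b t b - F a b t c := by
  apply intervalIntegral.integral_eq_sub_of_hasDeriv_right_of_le (f := F a b t) hcb.le
  · apply ContinuousOn.mul continuousOn_const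
    apply ContinuousOn.sub
    · apply ContinuousOn.mul continuousOn_const
      apply ContinuousOn.log continuous_G.continuousOn
      intro x hx
      have h1 : 0 < Real.sqrt ((b - t) * (x - a)) :=
        Real.sqrt_pos.mpr (by nlinarith [hx.1, hx.2])
      have h2 := Real.sqrt_nonneg ((t - a) * (b - x))
      unfold G
      positivity
    · apply ContinuousOn.log (by fun_prop)
      intro x hx
      intro h
      have : x = t := by linarith [sub_eq_zero.mp h]
      linarith [hx.1]
  · intro x hx
    exact (hasDerivAt_F hat htb (by linarith [hx.1]) hx.2 (by linarith [hx.1])).hasDerivWithinAt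
  · exact integrable_right hat htc hcb

lemma F_a {a b t : ℝ} (hat : a < t) (htb : t < b) :
    F a b t a = -(1 / Real.sqrt ((b - t) * (t - a))) * Real.log (b - a) := by
  unfold F G
  rw [show a - a = (0:ℝ) by ring, mul_zero, Real.sqrt_zero, zero_add,
    show a - t = -(t - a) by ring, Real.log_neg_eq_log,
    Real.log_sqrt (by nlinarith), Real.log_mul (ne_of_gt (by linarith)) (ne_of_gt (by linarith))]
  ring

lemma F_b {a b t : ℝ} (hat : a < t) (htb : t < b) :
    F a b t b = -(1 / Real.sqrt ((b - t) * (t - a))) * Real.log (b - a) := by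
  unfold F G
  rw [show b - b = (0:ℝ) by ring, mul_zero, Real.sqrt_zero, add_zero,
    Real.log_sqrt (by nlinarith), Real.log_mul (ne_of_gt (by linarith)) (ne_of_gt (by linarith))]
  ring

end PV15

/-- The principal value integral `P∫_a^b dx/((x-t)√((b-x)(x-a))) = 0` for `a < t < b`. -/
theorem stmt_15 (a b t : ℝ) (hat : a < t) (htb : t < b) :
    Filter.Tendsto
      (fun ε : ℝ =>
        (∫ x in a..(t - ε), 1 / ((x - t) * Real.sqrt ((b - x) * (x - a))))
          + ∫ x in (t + ε)..b, 1 / ((x - t) * Real.sqrt ((b - x) * (x - a))))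
      (nhdsWithin 0 (Set.Ioi 0)) (nhds 0) := by
  set S := Real.sqrt ((b - t) * (t - a)) with hS
  set φ : ℝ → ℝ := fun ε =>
    2 / S * (Real.log (PV15.G a b t (t + ε)) - Real.log (PV15.G a b t (t - ε))) with hφ
  have hGt : 0 < PV15.G a b t t := by
    have h1 : 0 < Real.sqrt ((b - t) * (t - a)) := Real.sqrt_pos.mpr (by nlinarith)
    have h2 := Real.sqrt_nonneg ((t - a) * (b - t))
    unfold PV15.G
    positivity
  have key : (fun ε : ℝ =>
        (∫ x in a..(t - ε), 1 / ((x - t) * Real.sqrt ((b - x) * (x - a))))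
          + ∫ x in (t + ε)..b, 1 / ((x - t) * Real.sqrt ((b - x) * (x - a))))
      =ᶠ[nhdsWithin 0 (Set.Ioi 0)] φ := by
    have hmem : Set.Ioo (0:ℝ) (min (t - a) (b - t)) ∈ nhdsWithin (0:ℝ) (Set.Ioi 0) :=
      Ioo_mem_nhdsGT_of_mem ⟨le_refl 0, lt_min (by linarith) (by linarith)⟩
    filter_upwards [hmem] with ε hε
    obtain ⟨hε0, hεm⟩ := hε
    have hε1 : ε < t - a := lt_of_lt_of_le hεm (min_le_left _ _)
    have hε2 : ε < b - t := lt_of_lt_of_le hεm (min_le_right _ _)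
    rw [PV15.eval_left hat htb (by linarith) (by linarith),
      PV15.eval_right hat htb (by linarith) (by linarith),
      PV15.F_a hat htb, PV15.F_b hat htb]
    show _ = 2 / S * _
    unfold PV15.F
    rw [show t - ε - t = -ε by ring, Real.log_neg_eq_log, show t + ε - t = ε by ring, ← hS]
    ring
  have hlim : Filter.Tendsto φ (nhds 0) (nhds (φ 0)) := by
    apply Filter.Tendsto.const_mul
    apply Filter.Tendsto.sub
    · have hf : Continuous (fun ε : ℝ => PV15.G a b t (t + ε)) :=
        PV15.continuous_G.comp (continuous_const.add continuous_id)
      exact hf.continuousAt.log (by simpa using hGt.ne')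
    · have hf : Continuous (fun ε : ℝ => PV15.G a b t (t - ε)) :=
        PV15.continuous_G.comp (continuous_const.sub continuous_id)
      exact hf.continuousAt.log (by simpa using hGt.ne')
  have hφ0 : φ 0 = 0 := by
    simp [hφ]
  rw [hφ0] at hlim
  exact Filter.Tendsto.congr' key.symm (hlim.mono_left nhdsWithin_le_nhds)
end

section
/- Let $H_{n-1},H_n,H_{n+1},r_n,\beta_n,R_{n-1},R_n$ (functions of $t$) satisfy: $tR_n=H_n-H_{n+1}$, $tR_{n-1}=H_{n-1}-H_n$, $H_n=n(n+\alpha+\gamma)+tr_n-\beta_n$, and $\beta_nR_{n-1}+\beta_nR_n=\beta_n-(2n+\alpha+\gamma)r_n-n(n+\alpha)$. If $2n+\alpha+\gamma-t+H_{n-1}-H_{n+1}\ne 0$, then $tr_n=\frac{n\gamma t-tH_n-[n(n+\alpha+\gamma)-H_n](H_{n-1}-H_{n+1})}{2n+\alpha+\gamma-t+H_{n-1}-H_{n+1}}$ and $\beta_n=\frac{n\gamma t+n(n+\alpha+\gamma)(2n+\alpha+\gamma-t)-(2n+\alpha+\gamma)H_n}{2n+\alpha+\gamma-t+H_{n-1}-H_{n+1}}$.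 -/
theorem stmt_18_general (n : ℕ) (α γ t : ℝ)
    (Hm H Hp rn βn Rnm1 Rn : ℝ)
    (h1 : t * Rn = H - Hp)
    (h2 : t * Rnm1 = Hm - H)
    (h3 : H = n * (n + α + γ) + t * rn - βn)
    (h4 : βn * Rnm1 + βn * Rn = βn - (2 * n + α + γ) * rn - n * (n + α))
    (hden : 2 * n + α + γ - t + Hm - Hp ≠ 0) :
    t * rn = (n * γ * t - t * H - (n * (n + α + γ) - H) * (Hm - Hp))
        / (2 * n + α + γ - t + Hm - Hp) ∧
    βn = (n * γ * t + n * (n + α + γ) * (2 * n + α + γ - t) - (2 * n + α + γ) * H)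
        / (2 * n + α + γ - t + Hm - Hp) := by
  -- `t · h4` with `t (R_{n-1} + R_n) = H_{n-1} - H_{n+1}`, together with `h3`, is a linear system
  -- in `t r_n` and `β_n` whose determinant is the denominator.
  constructor
  · rw [eq_div_iff hden]
    linear_combination t * h4 - βn * h1 - βn * h2 + (t - Hm + Hp) * h3
  · rw [eq_div_iff hden]
    linear_combination t * h4 - βn * h1 - βn * h2 + (2 * n + α + γ) * h3

/-- Solving the linear system for `t r_n` and `β_n` in terms of `H_{n-1}, H_n, H_{n+1}`. -/
theorem stmt_18 (n : ℕ) (hn : 1 ≤ n) (α γ t : ℝ) (ht : 0 < t)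
    (Hm H Hp rn βn Rnm1 Rn : ℝ)
    (h1 : t * Rn = H - Hp)
    (h2 : t * Rnm1 = Hm - H)
    (h3 : H = n * (n + α + γ) + t * rn - βn)
    (h4 : βn * Rnm1 + βn * Rn = βn - (2 * n + α + γ) * rn - n * (n + α))
    (hden : 2 * n + α + γ - t + Hm - Hp ≠ 0) :
    t * rn = (n * γ * t - t * H - (n * (n + α + γ) - H) * (Hm - Hp))
        / (2 * n + α + γ - t + Hm - Hp) ∧
    βn = (n * γ * t + n * (n + α + γ) * (2 * n + α + γ - t) - (2 * n + α + γ) * H)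
        / (2 * n + α + γ - t + Hm - Hp) :=
  stmt_18_general n α γ t Hm H Hp rn βn Rnm1 Rn h1 h2 h3 h4 hden
end
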